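/- Let G be the directed multigraph on vertex set {t_1,…,t_k, r_1,…,r_k, m_1, m_2} with unit-capacity edges: (t_i, r_i) for all i; (r_i, t_j) for all i ≠ j; (r_i, m_2) for all i; (m_2, m_1); (m_1, t_i) for all i. Then every directed path in G from r_i to t_i that does not use the edge (t_i, r_i) passes through the edge (m_2, m_1). -/

import Mathlib

/-- Vertices of the constructed network: transmitters, receivers, and two midway nodes. -/
abbrev NetV (k : ℕ) := (Fin k ⊕ Fin k) ⊕ Fin 2

def tNode {k : ℕ} (i : Fin k) : NetV k := Sum.inl (Sum.inl i)
def rNode {k : ℕ} (i : Fin k) : NetV k := Sum.inl (Sum.inr i)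
def m1Node {k : ℕ} : NetV k := Sum.inr 0
def m2Node {k : ℕ} : NetV k := Sum.inr 1

/-- The directed (quantum) edges of the constructed network:
`(t_i, r_i)`, `(r_i, t_j)` for `i ≠ j`, `(r_i, m_2)`, `(m_2, m_1)`, `(m_1, t_i)`. -/
def netEdge {k : ℕ} (u v : NetV k) : Prop :=
  (∃ i, u = tNode i ∧ v = rNode i) ∨
  (∃ i j, i ≠ j ∧ u = rNode i ∧ v = tNode j) ∨
  (∃ i, u = rNode i ∧ v = m2Node) ∨
  (u = m2Node ∧ v = m1Node) ∨
  (∃ i, u = m1Node ∧ v = tNode i)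

/-! Without the forward edges, a transmitter `t_j` is a dead end and `m_2` can only be left
towards `m_1`. A path from `r_i` must leave `r_i` towards some `t_j` with `j ≠ i` or towards
`m_2`; the first is impossible since `t_j` is not the end of the path, so the path continues
`r_i → m_2 → m_1`. -/

namespace List

variable {α : Type*} {R : α → α → Prop} {a b : α}

theorem rel_of_mem_zip_tail {p : List α} (hp : p.IsChain R) (hab : (a, b) ∈ p.zip p.tail) :
    R a b := by
  induction p with
  | nil => simp at hab
  | cons x p ih =>
    cases p with
    | nil => simp at hab
    | cons y p =>
      rw [isChain_cons_cons] at hp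
      rcases mem_cons.mp hab with h | h
      · simp only [Prod.mk.injEq] at h
        exact h.1 ▸ h.2 ▸ hp.1
      · exact ih hp.2 h

theorem exists_mem_zip_tail_of_mem {p : List α} (ha : a ∈ p) (hlast : p.getLast? ≠ some a) :
    ∃ b, (a, b) ∈ p.zip p.tail := by
  induction p with
  | nil => simp at ha
  | cons x p ih =>
    cases p with
    | nil => simp_all
    | cons y p =>
      rcases mem_cons.mp ha with rfl | ha
      · exact ⟨y, mem_cons_self⟩
      · obtain ⟨b, hb⟩ := ih ha (by simpa using hlast)
        exact ⟨b, mem_cons_of_mem _ hb⟩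

theorem exists_rel_mem_zip_tail {p : List α} (hp : p.IsChain R) (ha : a ∈ p)
    (hlast : p.getLast? ≠ some a) : ∃ b, R a b ∧ (a, b) ∈ p.zip p.tail :=
  (exists_mem_zip_tail_of_mem ha hlast).imp fun _ hb ↦ ⟨rel_of_mem_zip_tail hp hb, hb⟩

theorem mem_of_mem_zip_tail_right {p : List α} (hab : (a, b) ∈ p.zip p.tail) : b ∈ p :=
  mem_of_mem_tail (of_mem_zip hab).2

end List

section NetEdge

variable {k : ℕ}

theorem netEdge_tNode_iff {j : Fin k} {v : NetV k} : netEdge (tNode j) v ↔ v = rNode j := by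
  simp [netEdge, tNode, rNode, m1Node, m2Node]

theorem netEdge_rNode_iff {i : Fin k} {v : NetV k} :
    netEdge (rNode i) v ↔ (∃ j, j ≠ i ∧ v = tNode j) ∨ v = m2Node := by
  simp [netEdge, tNode, rNode, m1Node, m2Node, eq_comm]

theorem netEdge_m2Node_iff {v : NetV k} : netEdge m2Node v ↔ v = m1Node := by
  simp [netEdge, tNode, rNode, m1Node, m2Node]

end NetEdge

/-- Every directed path from `r_i` to `t_i` that avoids the forward edges `(t_ℓ, r_ℓ)`
must pass through the bottleneck edge `(m_2, m_1)`. -/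
theorem path_through_bottleneck {k : ℕ} (i : Fin k) (p : List (NetV k))
    (hchain : p.Chain' netEdge)
    (hhead : p.head? = some (rNode i)) (hlast : p.getLast? = some (tNode i))
    (havoid : ∀ ℓ : Fin k, (tNode ℓ, rNode ℓ) ∉ p.zip p.tail) :
    (m2Node, m1Node) ∈ p.zip p.tail := by
  have hr : rNode i ∈ p := List.mem_of_head? hhead
  obtain ⟨b, hrb, hb⟩ := List.exists_rel_mem_zip_tail hchain hr (by simp [hlast, tNode, rNode])
  rcases netEdge_rNode_iff.mp hrb with ⟨j, hji, rfl⟩ | rfl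
  · obtain ⟨c, htc, hc⟩ := List.exists_rel_mem_zip_tail hchain (List.mem_of_mem_zip_tail_right hb)
      (by simpa [hlast, tNode] using hji.symm)
    exact absurd (netEdge_tNode_iff.mp htc ▸ hc) (havoid j)
  · obtain ⟨c, hmc, hc⟩ := List.exists_rel_mem_zip_tail hchain (List.mem_of_mem_zip_tail_right hb)
      (by simp [hlast, tNode, m2Node])
    exact netEdge_m2Node_iff.mp hmc ▸ hc
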